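/- Let σ: [0,∞) → (0,∞) be continuous, let q ≥ 1, and suppose t > 0 satisfies t < (2q · sup_{r≥0} σ(r))^{-1} with sup_{r≥0} σ(r) finite. If (G_r)_{0≤r≤t} is a measurable Gaussian process where G_r ~ N(0, σ(r)) for each r, then E[exp{q ∫_0^t G_r² dr}] ≤ (1/t) ∫_0^t (1 - 2qt·σ(r))^{-1/2} dr < ∞. -/

import Mathlib

/-!
Jensen's inequality for `exp`, with respect to the normalised Lebesgue measure on `(0, t]`, bounds
`exp (q ∫₀ᵗ G_r²)` by the average over `r` of `exp (q t G_r²)`. After integrating in `ω` and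
swapping the two integrals, each inner expectation is the Gaussian integral
`E exp (a G_r²) = (1 - 2 a σ(r))^{-1/2}`, finite as long as `2 a σ(r) < 1`.
-/

open MeasureTheory ProbabilityTheory Real

open Set

section Jensen

variable {α : Type*} [MeasurableSpace α] {μ : Measure α} {f : α → ℝ}

lemma ofReal_exp_integral_le_lintegral [IsProbabilityMeasure μ] (hf : Integrable f μ) :
    ENNReal.ofReal (exp (∫ x, f x ∂μ)) ≤ ∫⁻ x, ENNReal.ofReal (exp (f x)) ∂μ := by
  have hexp_nonneg : 0 ≤ᵐ[μ] fun x => exp (f x) := ae_of_all _ fun x => (exp_pos _).le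
  by_cases hexp : Integrable (fun x => exp (f x)) μ
  · rw [← ofReal_integral_eq_lintegral_ofReal hexp hexp_nonneg]
    exact ENNReal.ofReal_le_ofReal <| convexOn_exp.map_integral_le continuous_exp.continuousOn
      isClosed_univ (ae_of_all _ fun _ => mem_univ _) hf hexp
  · have hmeas : AEStronglyMeasurable (fun x => exp (f x)) μ :=
      continuous_exp.comp_aestronglyMeasurable hf.aestronglyMeasurable
    rw [← lintegral_ofReal_ne_top_iff_integrable hmeas hexp_nonneg, not_not] at hexp
    rw [hexp]
    exact le_top

lemma ofReal_exp_average_le_laverage [IsFiniteMeasure μ] [NeZero μ] (hf : 0 ≤ᵐ[μ] f) :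
    ENNReal.ofReal (exp (⨍ x, f x ∂μ)) ≤ ⨍⁻ x, ENNReal.ofReal (exp (f x)) ∂μ := by
  rw [average_eq', laverage_eq']
  by_cases hfi : Integrable f ((μ univ)⁻¹ • μ)
  · exact ofReal_exp_integral_le_lintegral hfi
  · -- the average of a non-integrable function is `0` by convention, and `exp ∘ f ≥ 1`
    rw [integral_undef hfi, exp_zero, ENNReal.ofReal_one]
    calc (1 : ENNReal) = ∫⁻ _, 1 ∂((μ univ)⁻¹ • μ) := by simp
      _ ≤ _ := lintegral_mono_ae <| (Measure.ae_smul_measure hf _).mono fun x hx =>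
          ENNReal.one_le_ofReal.2 (one_le_exp hx)

end Jensen

lemma ofReal_exp_mul_intervalIntegral_le_setLAverage {t c : ℝ} (ht : 0 < t) (hc : 0 ≤ c)
    {f : ℝ → ℝ} (hf : ∀ r, 0 ≤ f r) :
    ENNReal.ofReal (exp (c * ∫ r in (0 : ℝ)..t, f r))
      ≤ ⨍⁻ r in Ioc 0 t, ENNReal.ofReal (exp (c * t * f r)) ∂volume := by
  have hne : NeZero (volume.restrict (Ioc 0 t)) := ⟨by simp [Measure.restrict_eq_zero, ht]⟩
  have havg : c * ∫ r in (0 : ℝ)..t, f r = ⨍ r in Ioc 0 t, c * t * f r := by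
    rw [← uIoc_of_le ht.le, interval_average_eq, intervalIntegral.integral_const_mul, smul_eq_mul,
      sub_zero]
    field_simp
  rw [havg]
  exact ofReal_exp_average_le_laverage
    (ae_of_all _ fun r => mul_nonneg (mul_nonneg hc ht.le) (hf r))

lemma lintegral_exp_mul_sq_gaussianReal {v : NNReal} {a : ℝ} (h : 2 * a * v < 1) :
    ∫⁻ y, ENNReal.ofReal (exp (a * y ^ 2)) ∂gaussianReal 0 v
      = ENNReal.ofReal ((1 - 2 * a * v) ^ (-(1 / 2 : ℝ))) := by
  rcases eq_or_ne v 0 with rfl | hv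
  · simp [gaussianReal_zero_var]
  -- the Gaussian density times `exp (a y²)` is a multiple of `exp (-b y²)`
  set b : ℝ := (2 * (v : ℝ))⁻¹ - a with hb
  have hb_pos : 0 < b := by
    rw [hb, sub_pos, ← one_div, lt_div_iff₀ (by positivity)]
    linarith
  have hdens : ∀ y, gaussianPDF 0 v y * ENNReal.ofReal (exp (a * y ^ 2))
      = ENNReal.ofReal ((√(2 * π * v))⁻¹ * exp (-b * y ^ 2)) := by
    intro y
    rw [gaussianPDF, ← ENNReal.ofReal_mul (gaussianPDFReal_nonneg _ _ _), gaussianPDFReal,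
      mul_assoc, ← exp_add, hb]
    congr 3
    field_simp
    ring
  rw [gaussianReal_of_var_ne_zero _ hv,
    lintegral_withDensity_eq_lintegral_mul₀ (by fun_prop) (by fun_prop)]
  simp only [Pi.mul_apply, hdens]
  rw [← ofReal_integral_eq_lintegral_ofReal ((integrable_exp_neg_mul_sq hb_pos).const_mul _)
    (ae_of_all _ fun y => by positivity), integral_const_mul, integral_gaussian]
  have h2vb : 2 * v * b = 1 - 2 * a * v := by rw [hb]; field_simp
  rw [rpow_neg (by linarith), ← sqrt_eq_rpow, ← h2vb, ← sqrt_inv, ← sqrt_inv,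
    ← sqrt_mul (by positivity)]
  congr 1
  field_simp

lemma lintegral_exp_mul_sq_of_map_eq_gaussianReal {Ω : Type*} [MeasurableSpace Ω] {μ : Measure Ω}
    {X : Ω → ℝ} (hX : AEMeasurable X μ) {v : NNReal} (hXv : μ.map X = gaussianReal 0 v) {a : ℝ}
    (h : 2 * a * v < 1) :
    ∫⁻ ω, ENNReal.ofReal (exp (a * X ω ^ 2)) ∂μ
      = ENNReal.ofReal ((1 - 2 * a * v) ^ (-(1 / 2 : ℝ))) := by
  rw [← lintegral_exp_mul_sq_gaussianReal h, ← hXv, lintegral_map' (by fun_prop) hX]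

lemma lintegral_setLAverage_comm {α β : Type*} [MeasurableSpace α] [MeasurableSpace β]
    {μ : Measure α} {ν : Measure β} [SFinite μ] [SFinite ν] {f : α → β → ENNReal}
    (hf : Measurable (Function.uncurry f)) (s : Set β) :
    ∫⁻ x, ⨍⁻ y in s, f x y ∂ν ∂μ = ⨍⁻ y in s, ∫⁻ x, f x y ∂μ ∂ν := by
  simp only [setLAverage_eq']
  exact lintegral_lintegral_swap hf.aemeasurable

lemma setLAverage_Ioc_ofReal {a b : ℝ} (hab : a ≤ b) {f : ℝ → ℝ} (hf : IntegrableOn f (Ioc a b))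
    (hf₀ : ∀ x ∈ Ioc a b, 0 ≤ f x) :
    ⨍⁻ x in Ioc a b, ENNReal.ofReal (f x) ∂volume
      = ENNReal.ofReal ((b - a)⁻¹ * ∫ x in a..b, f x) := by
  rw [setLAverage_eq,
    ← ofReal_setAverage hf ((ae_restrict_iff' measurableSet_Ioc).2 (ae_of_all _ hf₀)),
    ← uIoc_of_le hab, interval_average_eq, smul_eq_mul]

lemma lintegral_exp_mul_intervalIntegral_sq_le {Ω : Type*} [MeasurableSpace Ω] {μ : Measure Ω}
    [SFinite μ] {G : ℝ → Ω → ℝ} (hG : Measurable fun p : ℝ × Ω => G p.1 p.2) {v : ℝ → NNReal}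
    (hGv : ∀ r, μ.map (G r) = gaussianReal 0 (v r)) {t c : ℝ} (ht : 0 < t) (hc : 0 ≤ c)
    (hv : ∀ r ∈ Ioc 0 t, 2 * c * t * v r < 1) :
    ∫⁻ ω, ENNReal.ofReal (exp (c * ∫ r in (0 : ℝ)..t, G r ω ^ 2)) ∂μ
      ≤ ⨍⁻ r in Ioc 0 t, ENNReal.ofReal ((1 - 2 * c * t * v r) ^ (-(1 / 2 : ℝ))) ∂volume :=
  calc _ ≤ ∫⁻ ω, ⨍⁻ r in Ioc 0 t, ENNReal.ofReal (exp (c * t * G r ω ^ 2)) ∂volume ∂μ :=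
        lintegral_mono fun ω =>
          ofReal_exp_mul_intervalIntegral_le_setLAverage ht hc fun r => sq_nonneg _
    _ = ⨍⁻ r in Ioc 0 t, ∫⁻ ω, ENNReal.ofReal (exp (c * t * G r ω ^ 2)) ∂μ ∂volume :=
        lintegral_setLAverage_comm
          (((hG.comp measurable_swap).pow_const 2).const_mul _).exp.ennreal_ofReal _
    _ = _ := by
        refine setLAverage_congr_fun measurableSet_Ioc fun r hr => ?_
        have hGr : Measurable (G r) := hG.comp measurable_prodMk_left
        have hvr : 2 * (c * t) * v r < 1 := by rw [← mul_assoc]; exact hv r hr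
        rw [lintegral_exp_mul_sq_of_map_eq_gaussianReal hGr.aemeasurable (hGv r) hvr, ← mul_assoc]

theorem stmt4_general {Ω : Type*} [MeasurableSpace Ω] (μ : Measure Ω) [IsProbabilityMeasure μ]
    (σ : ℝ → ℝ) (hσcont : Continuous σ) (hσpos : ∀ r, 0 < σ r)
    (q : ℝ) (S : ℝ) (hS : ∀ r ≥ (0:ℝ), σ r ≤ S)
    (t : ℝ) (ht : 0 < t) (htT : t < (2 * q * S)⁻¹)
    (G : ℝ → Ω → ℝ)
    (hmeas : Measurable (fun p : ℝ × Ω => G p.1 p.2))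
    (hgauss : ∀ r, Measure.map (G r) μ = gaussianReal 0 (σ r).toNNReal) :
    (∫⁻ ω, ENNReal.ofReal (Real.exp (q * ∫ r in (0:ℝ)..t, (G r ω) ^ 2)) ∂μ)
      ≤ ENNReal.ofReal
          ((1 / t) * ∫ r in (0:ℝ)..t, (1 - 2 * q * t * σ r) ^ (-(1/2 : ℝ))) ∧
    (∫⁻ ω, ENNReal.ofReal (Real.exp (q * ∫ r in (0:ℝ)..t, (G r ω) ^ 2)) ∂μ) < ⊤ := by
  have hS0 : 0 < S := (hσpos 0).trans_le (hS 0 le_rfl)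
  have h2qS : 0 < 2 * q * S := inv_pos.1 (ht.trans htT)
  have hq : 0 < q := by nlinarith
  have htqS : t * (2 * q * S) < 1 := by rwa [← lt_div_iff₀ h2qS, one_div]
  have hvar : ∀ r ∈ Icc 0 t, 2 * q * t * σ r < 1 := fun r hr => by
    nlinarith [hS r hr.1, mul_pos hq ht]
  have hσr : ∀ r, ((σ r).toNNReal : ℝ) = σ r := fun r => coe_toNNReal _ (hσpos r).le
  have hbound := lintegral_exp_mul_intervalIntegral_sq_le hmeas hgauss ht hq.le fun r hr => by
    rw [hσr]; exact hvar r (Ioc_subset_Icc_self hr)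
  have hcont : ContinuousOn (fun r => (1 - 2 * q * t * σ r) ^ (-(1 / 2 : ℝ))) (Icc 0 t) :=
    ((continuous_const.sub (continuous_const.mul hσcont)).continuousOn).rpow_const
      fun r hr => Or.inl (sub_pos.2 (hvar r hr)).ne'
  simp only [hσr] at hbound
  rw [setLAverage_Ioc_ofReal ht.le (hcont.integrableOn_Icc.mono_set Ioc_subset_Icc_self)
    (fun r hr => rpow_nonneg (sub_pos.2 (hvar r (Ioc_subset_Icc_self hr))).le _),
    sub_zero, ← one_div] at hbound
  exact ⟨hbound, hbound.trans_lt ENNReal.ofReal_lt_top⟩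

theorem stmt4 {Ω : Type*} [MeasurableSpace Ω] (μ : Measure Ω) [IsProbabilityMeasure μ]
    (σ : ℝ → ℝ) (hσcont : Continuous σ) (hσpos : ∀ r, 0 < σ r)
    (q : ℝ) (hq : 1 ≤ q) (S : ℝ) (hS : ∀ r ≥ (0:ℝ), σ r ≤ S)
    (t : ℝ) (ht : 0 < t) (htT : t < (2 * q * S)⁻¹)
    (G : ℝ → Ω → ℝ)
    (hmeas : Measurable (fun p : ℝ × Ω => G p.1 p.2))
    (hgauss : ∀ r, Measure.map (G r) μ = gaussianReal 0 (σ r).toNNReal) :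
    (∫⁻ ω, ENNReal.ofReal (Real.exp (q * ∫ r in (0:ℝ)..t, (G r ω) ^ 2)) ∂μ)
      ≤ ENNReal.ofReal
          ((1 / t) * ∫ r in (0:ℝ)..t, (1 - 2 * q * t * σ r) ^ (-(1/2 : ℝ))) ∧
    (∫⁻ ω, ENNReal.ofReal (Real.exp (q * ∫ r in (0:ℝ)..t, (G r ω) ^ 2)) ∂μ) < ⊤ :=
  stmt4_general μ σ hσcont hσpos q S hS t ht htT G hmeas hgauss
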